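/- arXiv:1607.02189 — 11 statements merged into one kernel-verified Lean document; each statement's English description precedes it below -/
import Mathlib

section
/- Let W be a set with exactly three distinct elements a, b, c, and let π : Set W → Set (Set W) satisfy conditions (CJ1)–(CJ4). Suppose the conditional obligation O({a} | W) holds, i.e., for every X ⊆ W with a ∈ X one has {a} ∈ π(X). Then condition (CJ5) fails: it is NOT the case that for all X, Y, Z ⊆ W, if Z ∈ π(X), Y ⊆ X and Y ∩ Z ≠ ∅ then Z ∈ π(Y). -/
/-!
Assuming (CJ5), obligations at `{a}` inside `{a, c}` and inside `{a, b}` are lifted by (CJ4) to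
`W` as `{a, c}ᶜ ∪ {a}` and `{a, b}ᶜ ∪ {a}`, and then pushed by (CJ5) down to `{b, c}`, which meets
both (at `b` and at `c` respectively). By (CJ3) their intersection `{a, b, c}ᶜ ∪ {a}` lies in
`π {b, c}`; but it is disjoint from `{b, c}`, so by (CJ2) `∅ ∈ π {b, c}`, against (CJ1).
-/

open Set

section

variable {W : Type*} {π : Set W → Set (Set W)}

lemma notMem_of_inter_eq_empty
    (cj1 : ∀ X : Set W, (∅ : Set W) ∉ π X)
    (cj2 : ∀ X Y Z : Set W, Y ∩ X = Z ∩ X → (Y ∈ π X ↔ Z ∈ π X))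
    {X Y : Set W} (h : Y ∩ X = ∅) : Y ∉ π X := fun hY =>
  cj1 X ((cj2 X Y ∅ (by rw [h, empty_inter])).1 hY)

lemma compl_union_mem_of_cj4_cj5
    (cj4 : ∀ X Y Z : Set W, X ⊆ Y → Y ⊆ Z → X ∈ π Y → (Z \ Y) ∪ X ∈ π Z)
    (cj5 : ∀ X Y Z : Set W, Z ∈ π X → Y ⊆ X → Y ∩ Z ≠ ∅ → Z ∈ π Y)
    {X Y V : Set W} (hXY : X ⊆ Y) (hX : X ∈ π Y) (hV : V ∩ (Yᶜ ∪ X) ≠ ∅) :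
    Yᶜ ∪ X ∈ π V := by
  have hW : (univ \ Y) ∪ X ∈ π univ := cj4 X Y univ hXY (subset_univ Y) hX
  rw [← compl_eq_univ_sdiff] at hW
  exact cj5 univ V _ hW (subset_univ V) hV

end

theorem cj5_fails_in_three_point_model_general {W : Type} (a b c : W)
    (hab : a ≠ b) (hac : a ≠ c) (hbc : b ≠ c)
    (π : Set W → Set (Set W))
    (cj1 : ∀ X : Set W, (∅ : Set W) ∉ π X)
    (cj2 : ∀ X Y Z : Set W, Y ∩ X = Z ∩ X → (Y ∈ π X ↔ Z ∈ π X))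
    (cj3 : ∀ X Y Z : Set W, Y ∈ π X → Z ∈ π X → Y ∩ Z ∈ π X)
    (cj4 : ∀ X Y Z : Set W, X ⊆ Y → Y ⊆ Z → X ∈ π Y → (Z \ Y) ∪ X ∈ π Z)
    (hO : ∀ X : Set W, a ∈ X → ({a} : Set W) ∈ π X) :
    ¬ (∀ X Y Z : Set W, Z ∈ π X → Y ⊆ X → Y ∩ Z ≠ ∅ → Z ∈ π Y) := by
  intro cj5
  have hb : ({a, c}ᶜ ∪ {a} : Set W) ∈ π {b, c} :=
    compl_union_mem_of_cj4_cj5 cj4 cj5 (by simp) (hO _ (by simp))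
      (nonempty_iff_ne_empty.1 ⟨b, by simp [hab.symm, hbc]⟩)
  have hc : ({a, b}ᶜ ∪ {a} : Set W) ∈ π {b, c} :=
    compl_union_mem_of_cj4_cj5 cj4 cj5 (by simp) (hO _ (by simp))
      (nonempty_iff_ne_empty.1 ⟨c, by simp [hac.symm, hbc.symm]⟩)
  have hdisj : ({a, c}ᶜ ∪ {a}) ∩ ({a, b}ᶜ ∪ {a}) ∩ ({b, c} : Set W) = ∅ := by
    ext w
    simp only [mem_inter_iff, mem_union, mem_compl_iff, mem_insert_iff, mem_singleton_iff,
      mem_empty_iff_false, iff_false]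
    rintro ⟨⟨_, _⟩, rfl | rfl⟩ <;> tauto
  exact notMem_of_inter_eq_empty cj1 cj2 hdisj (cj3 _ _ _ hb hc)

/-- In a three-element world with π satisfying (CJ1)–(CJ4) and the
conditional obligation O({a} | W) (i.e., {a} ∈ π(X) for every X containing a),
condition (CJ5) fails. -/
theorem cj5_fails_in_three_point_model {W : Type} (a b c : W)
    (hab : a ≠ b) (hac : a ≠ c) (hbc : b ≠ c)
    (hcover : ∀ w : W, w = a ∨ w = b ∨ w = c)
    (π : Set W → Set (Set W))
    (cj1 : ∀ X : Set W, (∅ : Set W) ∉ π X)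
    (cj2 : ∀ X Y Z : Set W, Y ∩ X = Z ∩ X → (Y ∈ π X ↔ Z ∈ π X))
    (cj3 : ∀ X Y Z : Set W, Y ∈ π X → Z ∈ π X → Y ∩ Z ∈ π X)
    (cj4 : ∀ X Y Z : Set W, X ⊆ Y → Y ⊆ Z → X ∈ π Y → (Z \ Y) ∪ X ∈ π Z)
    (hO : ∀ X : Set W, a ∈ X → ({a} : Set W) ∈ π X) :
    ¬ (∀ X Y Z : Set W, Z ∈ π X → Y ⊆ X → Y ∩ Z ≠ ∅ → Z ∈ π Y) :=
  cj5_fails_in_three_point_model_general a b c hab hac hbc π cj1 cj2 cj3 cj4 hO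
end

section
/- Let W be a set with exactly three distinct elements a, b, c, and let π : Set W → Set (Set W) satisfy conditions (CJ1)–(CJ4). Suppose that for every X ⊆ W with a ∈ X one has {a} ∈ π(X) (i.e., the conditional obligation O({a} | W) holds). Then for every X ⊆ W with a ∈ X, π(X) equals the set of all Y ⊆ W with a ∈ Y (that is, π(X) = U({a}), the collection of supersets of {a}). -/
/-!
If `{a}` is obligatory under every condition containing `a`, then (CJ4) lifts the obligation
`{a} ∈ π((X \ S) ∪ {a})` to `S ∈ π(X)` for every `S` with `a ∈ S ⊆ X`, and (CJ2) extends this to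
every superset of `{a}`. Conversely, (CJ3) and (CJ1) force every member of `π(X)` to meet `{a}`.
-/

namespace DeonticSelection

variable {W : Type*} {π : Set W → Set (Set W)}

theorem inter_nonempty_of_mem (cj1 : ∀ X : Set W, (∅ : Set W) ∉ π X)
    (cj3 : ∀ X Y Z : Set W, Y ∈ π X → Z ∈ π X → Y ∩ Z ∈ π X)
    {X Y Z : Set W} (hY : Y ∈ π X) (hZ : Z ∈ π X) : (Y ∩ Z).Nonempty :=
  Set.nonempty_iff_ne_empty.mpr fun h => cj1 X (h ▸ cj3 X Y Z hY hZ)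

theorem mem_of_inter_mem (cj2 : ∀ X Y Z : Set W, Y ∩ X = Z ∩ X → (Y ∈ π X ↔ Z ∈ π X))
    {X Y : Set W} (h : Y ∩ X ∈ π X) : Y ∈ π X :=
  (cj2 X Y (Y ∩ X) (by rw [Set.inter_assoc, Set.inter_self])).mpr h

theorem mem_of_subset_of_forall_mem
    (cj4 : ∀ X Y Z : Set W, X ⊆ Y → Y ⊆ Z → X ∈ π Y → (Z \ Y) ∪ X ∈ π Z)
    {A : Set W} (hA : ∀ S : Set W, A ⊆ S → A ∈ π S)
    {S X : Set W} (hAS : A ⊆ S) (hSX : S ⊆ X) : S ∈ π X := by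
  have hAX : A ⊆ X := hAS.trans hSX
  have hlift := cj4 A ((X \ S) ∪ A) X Set.subset_union_right
    (Set.union_subset Set.sdiff_subset hAX) (hA _ Set.subset_union_right)
  have hrecover : (X \ ((X \ S) ∪ A)) ∪ A = S := by
    ext x
    by_cases hxA : x ∈ A
    · simp [hxA, hAS hxA]
    · by_cases hxS : x ∈ S
      · simp [hxA, hxS, hSX hxS]
      · simp [hxA, hxS]
  rwa [hrecover] at hlift

end DeonticSelection

open DeonticSelection in
theorem pi_eq_supersets_in_three_point_model_general {W : Type} (a : W)
    (π : Set W → Set (Set W))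
    (cj1 : ∀ X : Set W, (∅ : Set W) ∉ π X)
    (cj2 : ∀ X Y Z : Set W, Y ∩ X = Z ∩ X → (Y ∈ π X ↔ Z ∈ π X))
    (cj3 : ∀ X Y Z : Set W, Y ∈ π X → Z ∈ π X → Y ∩ Z ∈ π X)
    (cj4 : ∀ X Y Z : Set W, X ⊆ Y → Y ⊆ Z → X ∈ π Y → (Z \ Y) ∪ X ∈ π Z)
    (hO : ∀ X : Set W, a ∈ X → ({a} : Set W) ∈ π X) :
    ∀ X : Set W, a ∈ X → π X = {Y : Set W | ({a} : Set W) ⊆ Y} := by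
  intro X haX
  ext Y
  constructor
  · intro hY
    obtain ⟨x, hxY, rfl⟩ := inter_nonempty_of_mem cj1 cj3 hY (hO X haX)
    exact Set.singleton_subset_iff.mpr hxY
  · intro haY
    have hsingleton : ∀ S : Set W, {a} ⊆ S → {a} ∈ π S := fun S h =>
      hO S (Set.singleton_subset_iff.mp h)
    exact mem_of_inter_mem cj2 (mem_of_subset_of_forall_mem cj4 hsingleton
      (Set.subset_inter haY (Set.singleton_subset_iff.mpr haX)) Set.inter_subset_right)

/-- In a three-element world with π satisfying (CJ1)–(CJ4) and the
conditional obligation O({a} | W), for every X containing a, π(X) equals the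
collection U({a}) of all supersets of {a}. -/
theorem pi_eq_supersets_in_three_point_model {W : Type} (a b c : W)
    (hab : a ≠ b) (hac : a ≠ c) (hbc : b ≠ c)
    (hcover : ∀ w : W, w = a ∨ w = b ∨ w = c)
    (π : Set W → Set (Set W))
    (cj1 : ∀ X : Set W, (∅ : Set W) ∉ π X)
    (cj2 : ∀ X Y Z : Set W, Y ∩ X = Z ∩ X → (Y ∈ π X ↔ Z ∈ π X))
    (cj3 : ∀ X Y Z : Set W, Y ∈ π X → Z ∈ π X → Y ∩ Z ∈ π X)
    (cj4 : ∀ X Y Z : Set W, X ⊆ Y → Y ⊆ Z → X ∈ π Y → (Z \ Y) ∪ X ∈ π Z)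
    (hO : ∀ X : Set W, a ∈ X → ({a} : Set W) ∈ π X) :
    ∀ X : Set W, a ∈ X → π X = {Y : Set W | ({a} : Set W) ⊆ Y} :=
  pi_eq_supersets_in_three_point_model_general a π cj1 cj2 cj3 cj4 hO
end

section
/- There exist a set W with exactly two distinct elements w and y, functions av, pv : W → Set W satisfying v ∈ av(v) and av(v) ⊆ pv(v) for every v ∈ W, a map π : Set W → Set (Set W) satisfying conditions (CJ1)–(CJ4), and sets A, B ⊆ W, such that the conditional obligation O(B | A) holds, pv(w) ∩ A ≠ ∅, and pv(w) ∩ B = ∅. In particular, the schema O(B|A) ∧ ◇A → ◇B is not valid in CJ models (Ought does not imply potential possibility). -/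
/-!
Rank the two worlds so that `true` is strictly better than `false`, and let `π X` consist of the
sets containing every best world of a nonempty `X`. Selection functions of this form satisfy
(CJ1)–(CJ4), because a best world of a set stays best in every subset containing it. Taking
`A` to be everything and `B = {true}`, every `X ⊆ A` meeting `B` has `true` as its only best
world, so `O(B | A)` holds. Yet at `false`, with `pv false = {false}`, the set `A` is potentially
possible while `B` is not.
-/

open Set

variable {W : Type*}

structure IsCJSelection (π : Set W → Set (Set W)) : Prop where
  empty_not_mem : ∀ X, ∅ ∉ π X
  mem_congr : ∀ X Y Z, Y ∩ X = Z ∩ X → (Y ∈ π X ↔ Z ∈ π X)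
  inter_mem : ∀ X Y Z, Y ∈ π X → Z ∈ π X → Y ∩ Z ∈ π X
  diff_union_mem : ∀ X Y Z, X ⊆ Y → Y ⊆ Z → X ∈ π Y → (Z \ Y) ∪ X ∈ π Z

def selectionOf (best : Set W → Set W) (X : Set W) : Set (Set W) :=
  {Y | X.Nonempty ∧ best X ⊆ Y}

theorem isCJSelection_selectionOf {best : Set W → Set W} (subset : ∀ X, best X ⊆ X)
    (nonempty : ∀ X, X.Nonempty → (best X).Nonempty)
    (inter_subset : ∀ Y Z, Y ⊆ Z → best Z ∩ Y ⊆ best Y) :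
    IsCJSelection (selectionOf best) where
  empty_not_mem X := fun ⟨hX, hbest⟩ => (nonempty X hX).ne_empty (subset_empty_iff.mp hbest)
  mem_congr X Y Z h := by
    have key : ∀ Y, best X ⊆ Y ↔ best X ⊆ Y ∩ X := fun Y => by
      rw [subset_inter_iff, and_iff_left (subset X)]
    simp only [selectionOf, mem_ofPred_eq, key Y, key Z, h]
  inter_mem _ _ _ := fun ⟨hX, hY⟩ ⟨_, hZ⟩ => ⟨hX, subset_inter hY hZ⟩
  diff_union_mem X Y Z _ hYZ := by
    rintro ⟨hY, hbest⟩
    refine ⟨hY.mono hYZ, fun a ha => ?_⟩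
    by_cases haY : a ∈ Y
    · exact Or.inr (hbest (inter_subset Y Z hYZ ⟨ha, haY⟩))
    · exact Or.inl ⟨subset Z ha, haY⟩

section bestOf

variable {α : Type*} [LinearOrder α] (r : W → α)

def bestOf (X : Set W) : Set W :=
  {x ∈ X | ∀ y ∈ X, r x ≤ r y}

theorem bestOf_subset (X : Set W) : bestOf r X ⊆ X := fun _ hx => hx.1

theorem bestOf_nonempty [WellFoundedLT α] {X : Set W} (hX : X.Nonempty) :
    (bestOf r X).Nonempty :=
  ⟨Function.argminOn r X hX, Function.argminOn_mem r X hX,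
    fun _ hy => not_lt.mp (Function.not_lt_argminOn r X hy)⟩

theorem bestOf_inter_subset {Y Z : Set W} (hYZ : Y ⊆ Z) : bestOf r Z ∩ Y ⊆ bestOf r Y :=
  fun _ ⟨hx, hxY⟩ => ⟨hxY, fun y hy => hx.2 y (hYZ hy)⟩

theorem isCJSelection_selectionOf_bestOf [WellFoundedLT α] :
    IsCJSelection (selectionOf (bestOf r)) :=
  isCJSelection_selectionOf (bestOf_subset r) (fun _ => bestOf_nonempty r)
    (fun _ _ => bestOf_inter_subset r)

theorem bestOf_subset_of_mem {X : Set W} {b : W} (hb : b ∈ X) :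
    bestOf r X ⊆ {x | r x ≤ r b} :=
  fun _ hx => hx.2 b hb

end bestOf

/-- There is a two-world CJ model in which O(B | A) holds, A is
potentially possible at w, but B is not: Ought does not imply potential
possibility. -/
theorem exists_cj_countermodel_ought_implies_can :
    ∃ (W : Type) (w y : W), w ≠ y ∧ (∀ v : W, v = w ∨ v = y) ∧
      ∃ (av pv : W → Set W) (π : Set W → Set (Set W)) (A B : Set W),
        (∀ v : W, v ∈ av v) ∧ (∀ v : W, av v ⊆ pv v) ∧
        (∀ X : Set W, (∅ : Set W) ∉ π X) ∧
        (∀ X Y Z : Set W, Y ∩ X = Z ∩ X → (Y ∈ π X ↔ Z ∈ π X)) ∧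
        (∀ X Y Z : Set W, Y ∈ π X → Z ∈ π X → Y ∩ Z ∈ π X) ∧
        (∀ X Y Z : Set W, X ⊆ Y → Y ⊆ Z → X ∈ π Y → (Z \ Y) ∪ X ∈ π Z) ∧
        (A ∩ B ≠ ∅ ∧ ∀ X : Set W, X ⊆ A → X ∩ B ≠ ∅ → B ∈ π X) ∧
        pv w ∩ A ≠ ∅ ∧
        pv w ∩ B = ∅ := by
  have hπ := isCJSelection_selectionOf_bestOf (fun b : Bool => !b)
  have ought (X : Set Bool) (hX : X ∩ {true} ≠ ∅) : {true} ∈ selectionOf (bestOf (!·)) X := by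
    have htrue : true ∈ X := by simpa [inter_singleton_eq_empty] using hX
    refine ⟨⟨true, htrue⟩, (bestOf_subset_of_mem _ htrue).trans fun x hx => ?_⟩
    change (!x) ≤ !true at hx
    revert hx
    cases x <;> decide
  refine ⟨Bool, false, true, Bool.false_ne_true, fun v => (Bool.eq_false_or_eq_true v).symm,
    ({·}), ({·}), selectionOf (bestOf (!·)), univ, {true}, mem_singleton, fun _ => subset_rfl,
    hπ.empty_not_mem, hπ.mem_congr, hπ.inter_mem, hπ.diff_union_mem,
    ⟨by simp, fun X _ hX => ought X hX⟩, by simp, by simp⟩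
end

section
/- Let W be a type and let π : Set W → Set (Set W) satisfy conditions (CJ1)–(CJ4). Then for all X, Y, Z ⊆ W, if X ∈ π(Y) and X ∈ π(Z), then X ∈ π(Y ∪ Z). -/
/-! Relativise `X` to `Y` and to `Z` via (CJ2), lift both to `Y ∪ Z` with (CJ4), and intersect
them with (CJ3): on `Y ∪ Z` the intersection agrees with `X`, so (CJ2) concludes. -/

section DeonticSelection

variable {W : Type} (π : Set W → Set (Set W))

theorem mem_pi_iff_inter_mem
    (cj2 : ∀ X Y Z : Set W, Y ∩ X = Z ∩ X → (Y ∈ π X ↔ Z ∈ π X)) (X Y : Set W) :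
    X ∈ π Y ↔ X ∩ Y ∈ π Y :=
  cj2 Y X (X ∩ Y) (by rw [Set.inter_assoc, Set.inter_self])

theorem diff_union_inter_mem_pi_of_subset
    (cj2 : ∀ X Y Z : Set W, Y ∩ X = Z ∩ X → (Y ∈ π X ↔ Z ∈ π X))
    (cj4 : ∀ X Y Z : Set W, X ⊆ Y → Y ⊆ Z → X ∈ π Y → (Z \ Y) ∪ X ∈ π Z)
    {X Y Z : Set W} (hX : X ∈ π Y) (hYZ : Y ⊆ Z) :
    (Z \ Y) ∪ (X ∩ Y) ∈ π Z :=
  cj4 (X ∩ Y) Y Z Set.inter_subset_right hYZ ((mem_pi_iff_inter_mem π cj2 X Y).mp hX)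

end DeonticSelection

theorem pi_union_general {W : Type} (π : Set W → Set (Set W))
    (cj2 : ∀ X Y Z : Set W, Y ∩ X = Z ∩ X → (Y ∈ π X ↔ Z ∈ π X))
    (cj3 : ∀ X Y Z : Set W, Y ∈ π X → Z ∈ π X → Y ∩ Z ∈ π X)
    (cj4 : ∀ X Y Z : Set W, X ⊆ Y → Y ⊆ Z → X ∈ π Y → (Z \ Y) ∪ X ∈ π Z) :
    ∀ X Y Z : Set W, X ∈ π Y → X ∈ π Z → X ∈ π (Y ∪ Z) := by
  intro X Y Z hY hZ
  have hYU := diff_union_inter_mem_pi_of_subset π cj2 cj4 hY (Set.subset_union_left (t := Z))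
  have hZU := diff_union_inter_mem_pi_of_subset π cj2 cj4 hZ (Set.subset_union_right (s := Y))
  have h_agree : (((Y ∪ Z) \ Y) ∪ (X ∩ Y)) ∩ (((Y ∪ Z) \ Z) ∪ (X ∩ Z)) ∩ (Y ∪ Z)
      = X ∩ (Y ∪ Z) := by
    ext w
    simp only [Set.mem_inter_iff, Set.mem_union, Set.mem_sdiff]
    tauto
  exact (cj2 _ _ X h_agree).mp (cj3 _ _ _ hYU hZU)

/-- Under (CJ1)–(CJ4), if X ∈ π(Y) and X ∈ π(Z) then X ∈ π(Y ∪ Z). -/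
theorem pi_union {W : Type} (π : Set W → Set (Set W))
    (cj1 : ∀ X : Set W, (∅ : Set W) ∉ π X)
    (cj2 : ∀ X Y Z : Set W, Y ∩ X = Z ∩ X → (Y ∈ π X ↔ Z ∈ π X))
    (cj3 : ∀ X Y Z : Set W, Y ∈ π X → Z ∈ π X → Y ∩ Z ∈ π X)
    (cj4 : ∀ X Y Z : Set W, X ⊆ Y → Y ⊆ Z → X ∈ π Y → (Z \ Y) ∪ X ∈ π Z) :
    ∀ X Y Z : Set W, X ∈ π Y → X ∈ π Z → X ∈ π (Y ∪ Z) :=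
  pi_union_general π cj2 cj3 cj4
end

section
/- Let W be a type, π : Set W → Set (Set W) satisfy conditions (CJ1)–(CJ4), and A, B ⊆ W. Suppose the conditional obligation O(B | A) holds, and let X₀ ⊆ W be a context with X₀ ∩ A ∩ B ≠ ∅ and X₀ ∩ A ∩ Bᶜ ≠ ∅. Then Aᶜ ∪ B ∈ π(X₀) and X₀ ∩ (Aᶜ ∪ B)ᶜ ≠ ∅; that is, the material conditional A → B is obligatory in context X₀. -/
/-! Restricting the context to `X₀ ∩ A`, the conditional obligation gives `B ∈ π (X₀ ∩ A)`.
(CJ4) extends this to the context `X₀`, where, by (CJ2), only the trace on `X₀` matters: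
the extension agrees on `X₀` with `Aᶜ ∪ B`. Violability is witnessed by `X₀ ∩ A ∩ Bᶜ`. -/

section SelectionFunction

variable {W : Type} {π : Set W → Set (Set W)}
  (cj2 : ∀ X Y Z : Set W, Y ∩ X = Z ∩ X → (Y ∈ π X ↔ Z ∈ π X))
  (cj4 : ∀ X Y Z : Set W, X ⊆ Y → Y ⊆ Z → X ∈ π Y → (Z \ Y) ∪ X ∈ π Z)
include cj2 cj4

theorem compl_union_mem_of_subset {X Y B : Set W} (hYX : Y ⊆ X) (hB : B ∈ π Y) :
    Yᶜ ∪ B ∈ π X := by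
  have hBY : B ∩ Y ∈ π Y := (cj2 Y (B ∩ Y) B (by rw [Set.inter_assoc, Set.inter_self])).mpr hB
  have hext : (X \ Y) ∪ (B ∩ Y) ∈ π X := cj4 _ _ _ Set.inter_subset_right hYX hBY
  refine (cj2 X _ _ ?_).mpr hext
  ext w
  simp only [Set.mem_inter_iff, Set.mem_union, Set.mem_sdiff, Set.mem_compl_iff]
  tauto

theorem compl_union_mem_of_mem_inter {X A B : Set W} (hB : B ∈ π (X ∩ A)) :
    Aᶜ ∪ B ∈ π X := by
  refine (cj2 X _ _ ?_).mpr (compl_union_mem_of_subset cj2 cj4 Set.inter_subset_left hB)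
  ext w
  simp only [Set.mem_inter_iff, Set.mem_union, Set.mem_compl_iff]
  tauto

end SelectionFunction

theorem inter_compl_material_conditional {W : Type} (X A B : Set W) :
    X ∩ (Aᶜ ∪ B)ᶜ = X ∩ A ∩ Bᶜ := by
  rw [Set.compl_union, compl_compl, Set.inter_assoc]

theorem obligatory_material_conditional_general {W : Type} (π : Set W → Set (Set W))
    (cj2 : ∀ X Y Z : Set W, Y ∩ X = Z ∩ X → (Y ∈ π X ↔ Z ∈ π X))
    (cj4 : ∀ X Y Z : Set W, X ⊆ Y → Y ⊆ Z → X ∈ π Y → (Z \ Y) ∪ X ∈ π Z)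
    (A B : Set W)
    (hO : A ∩ B ≠ ∅ ∧ ∀ X : Set W, X ⊆ A → X ∩ B ≠ ∅ → B ∈ π X)
    (X₀ : Set W) (h1 : X₀ ∩ A ∩ B ≠ ∅) (h2 : X₀ ∩ A ∩ Bᶜ ≠ ∅) :
    Aᶜ ∪ B ∈ π X₀ ∧ X₀ ∩ (Aᶜ ∪ B)ᶜ ≠ ∅ := by
  have hB : B ∈ π (X₀ ∩ A) := hO.2 _ Set.inter_subset_right h1
  exact ⟨compl_union_mem_of_mem_inter cj2 cj4 hB, inter_compl_material_conditional X₀ A B ▸ h2⟩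

/-- if O(B | A) holds and X₀ ∩ A ∩ B ≠ ∅ and X₀ ∩ A ∩ Bᶜ ≠ ∅,
then the material conditional A → B (truth set Aᶜ ∪ B) is obligatory in
context X₀. -/
theorem obligatory_material_conditional {W : Type} (π : Set W → Set (Set W))
    (cj1 : ∀ X : Set W, (∅ : Set W) ∉ π X)
    (cj2 : ∀ X Y Z : Set W, Y ∩ X = Z ∩ X → (Y ∈ π X ↔ Z ∈ π X))
    (cj3 : ∀ X Y Z : Set W, Y ∈ π X → Z ∈ π X → Y ∩ Z ∈ π X)
    (cj4 : ∀ X Y Z : Set W, X ⊆ Y → Y ⊆ Z → X ∈ π Y → (Z \ Y) ∪ X ∈ π Z)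
    (A B : Set W)
    (hO : A ∩ B ≠ ∅ ∧ ∀ X : Set W, X ⊆ A → X ∩ B ≠ ∅ → B ∈ π X)
    (X₀ : Set W) (h1 : X₀ ∩ A ∩ B ≠ ∅) (h2 : X₀ ∩ A ∩ Bᶜ ≠ ∅) :
    Aᶜ ∪ B ∈ π X₀ ∧ X₀ ∩ (Aᶜ ∪ B)ᶜ ≠ ∅ :=
  obligatory_material_conditional_general π cj2 cj4 A B hO X₀ h1 h2
end

section
/- (Restricted deontic detachment.) Let W be a type, π : Set W → Set (Set W) satisfy conditions (CJ1)–(CJ4), and A, B ⊆ W. Let X₀ ⊆ W be a context such that A is obligatory in context X₀ (i.e., A ∈ π(X₀) and X₀ ∩ Aᶜ ≠ ∅), the conditional obligation O(B | A) holds, and X₀ ∩ A ∩ B ≠ ∅. Then A ∩ B is obligatory in context X₀, i.e., A ∩ B ∈ π(X₀) and X₀ ∩ (A ∩ B)ᶜ ≠ ∅. -/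
/-!
Restrict the context to `X₀ ∩ A`, where the conditional obligation gives `B ∈ π (X₀ ∩ A)`.
(CJ4), together with (CJ2), lifts this back to `X₀` as `(X₀ \ A) ∪ B ∈ π X₀`; intersecting with
`A ∈ π X₀` by (CJ3) and reading the result inside `X₀` by (CJ2) gives `A ∩ B ∈ π X₀`.
The violability condition only gets weaker when `A` shrinks to `A ∩ B`.
-/

namespace DeonticSelection

variable {W : Type*} {π : Set W → Set (Set W)}

theorem union_diff_mem_of_subset
    (cj2 : ∀ X Y Z : Set W, Y ∩ X = Z ∩ X → (Y ∈ π X ↔ Z ∈ π X))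
    (cj4 : ∀ X Y Z : Set W, X ⊆ Y → Y ⊆ Z → X ∈ π Y → (Z \ Y) ∪ X ∈ π Z)
    {X Y Z : Set W} (hXZ : X ⊆ Z) (hY : Y ∈ π X) : (Z \ X) ∪ Y ∈ π Z := by
  have hYX : Y ∩ X ∈ π X := (cj2 X _ _ (by rw [Set.inter_assoc, Set.inter_self])).1 hY
  have hlift : (Z \ X) ∪ (Y ∩ X) ∈ π Z := cj4 _ _ _ Set.inter_subset_right hXZ hYX
  refine (cj2 Z _ _ ?_).1 hlift
  ext w
  simp only [Set.mem_inter_iff, Set.mem_union, Set.mem_sdiff]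
  tauto

theorem inter_mem_of_mem_restrict
    (cj2 : ∀ X Y Z : Set W, Y ∩ X = Z ∩ X → (Y ∈ π X ↔ Z ∈ π X))
    (cj3 : ∀ X Y Z : Set W, Y ∈ π X → Z ∈ π X → Y ∩ Z ∈ π X)
    (cj4 : ∀ X Y Z : Set W, X ⊆ Y → Y ⊆ Z → X ∈ π Y → (Z \ Y) ∪ X ∈ π Z)
    {X A B : Set W} (hA : A ∈ π X) (hB : B ∈ π (X ∩ A)) : A ∩ B ∈ π X := by
  have hlift : (X \ (X ∩ A)) ∪ B ∈ π X :=
    union_diff_mem_of_subset cj2 cj4 Set.inter_subset_left hB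
  refine (cj2 X _ _ ?_).1 (cj3 X _ _ hlift hA)
  ext w
  simp only [Set.mem_inter_iff, Set.mem_union, Set.mem_sdiff]
  tauto

end DeonticSelection

theorem restricted_deontic_detachment_general {W : Type} (π : Set W → Set (Set W))
    (cj2 : ∀ X Y Z : Set W, Y ∩ X = Z ∩ X → (Y ∈ π X ↔ Z ∈ π X))
    (cj3 : ∀ X Y Z : Set W, Y ∈ π X → Z ∈ π X → Y ∩ Z ∈ π X)
    (cj4 : ∀ X Y Z : Set W, X ⊆ Y → Y ⊆ Z → X ∈ π Y → (Z \ Y) ∪ X ∈ π Z)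
    (A B : Set W) (X₀ : Set W)
    (hA : A ∈ π X₀ ∧ X₀ ∩ Aᶜ ≠ ∅)
    (hO : A ∩ B ≠ ∅ ∧ ∀ X : Set W, X ⊆ A → X ∩ B ≠ ∅ → B ∈ π X)
    (h : X₀ ∩ A ∩ B ≠ ∅) :
    A ∩ B ∈ π X₀ ∧ X₀ ∩ (A ∩ B)ᶜ ≠ ∅ := by
  have hB : B ∈ π (X₀ ∩ A) := hO.2 _ Set.inter_subset_right h
  refine ⟨DeonticSelection.inter_mem_of_mem_restrict cj2 cj3 cj4 hA.1 hB, fun hempty => hA.2 ?_⟩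
  have hsub : X₀ ∩ Aᶜ ⊆ X₀ ∩ (A ∩ B)ᶜ :=
    Set.inter_subset_inter_right _ (Set.compl_subset_compl.2 Set.inter_subset_left)
  exact Set.subset_eq_empty hsub hempty

/-- Restricted deontic detachment: if A is obligatory in
context X₀, O(B | A) holds and X₀ ∩ A ∩ B ≠ ∅, then A ∩ B is obligatory in
context X₀. -/
theorem restricted_deontic_detachment {W : Type} (π : Set W → Set (Set W))
    (cj1 : ∀ X : Set W, (∅ : Set W) ∉ π X)
    (cj2 : ∀ X Y Z : Set W, Y ∩ X = Z ∩ X → (Y ∈ π X ↔ Z ∈ π X))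
    (cj3 : ∀ X Y Z : Set W, Y ∈ π X → Z ∈ π X → Y ∩ Z ∈ π X)
    (cj4 : ∀ X Y Z : Set W, X ⊆ Y → Y ⊆ Z → X ∈ π Y → (Z \ Y) ∪ X ∈ π Z)
    (A B : Set W) (X₀ : Set W)
    (hA : A ∈ π X₀ ∧ X₀ ∩ Aᶜ ≠ ∅)
    (hO : A ∩ B ≠ ∅ ∧ ∀ X : Set W, X ⊆ A → X ∩ B ≠ ∅ → B ∈ π X)
    (h : X₀ ∩ A ∩ B ≠ ∅) :
    A ∩ B ∈ π X₀ ∧ X₀ ∩ (A ∩ B)ᶜ ≠ ∅ :=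
  restricted_deontic_detachment_general π cj2 cj3 cj4 A B X₀ hA hO h
end

section
/- (Strong classicality II.) Let W be a type, π : Set W → Set (Set W) satisfy condition (CJ2), and A, B ⊆ W. Let X₀ ⊆ W be a context with X₀ ⊆ A. If B is obligatory in context X₀ (i.e., B ∈ π(X₀) and X₀ ∩ Bᶜ ≠ ∅), then A ∩ B is obligatory in context X₀ (i.e., A ∩ B ∈ π(X₀) and X₀ ∩ (A ∩ B)ᶜ ≠ ∅). -/
/-- Strong classicality II: if X₀ ⊆ A and B is obligatory in
context X₀, then A ∩ B is obligatory in context X₀. -/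
theorem strong_classicality_II {W : Type} (π : Set W → Set (Set W))
    (cj2 : ∀ X Y Z : Set W, Y ∩ X = Z ∩ X → (Y ∈ π X ↔ Z ∈ π X))
    (A B : Set W) (X₀ : Set W) (h : X₀ ⊆ A)
    (hB : B ∈ π X₀ ∧ X₀ ∩ Bᶜ ≠ ∅) :
    A ∩ B ∈ π X₀ ∧ X₀ ∩ (A ∩ B)ᶜ ≠ ∅ := by
  obtain ⟨hBπ, hBviolable⟩ := hB
  have hagree : A ∩ B ∩ X₀ = B ∩ X₀ := by
    rw [Set.inter_right_comm, Set.inter_eq_right.2 h, Set.inter_comm]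
  refine ⟨(cj2 X₀ (A ∩ B) B hagree).2 hBπ, ?_⟩
  rw [← Set.nonempty_iff_ne_empty] at hBviolable ⊢
  exact hBviolable.mono <| Set.inter_subset_inter_right _ <|
    Set.compl_subset_compl.2 Set.inter_subset_right
end

section
/- Let W be a type and let π : Set W → Set (Set W) satisfy conditions (CJ1), (CJ2) and (CJ5). Let w ∈ W and suppose the whole set W belongs to π(W). Then π({w}) equals the collection of all sets Z ⊆ W with w ∈ Z; that is, π({w}) = U({w}), the collection of supersets of {w}. -/
open Set

section DeonticSelection

variable {W : Type*} {π : Set W → Set (Set W)} {X Z : Set W}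

theorem mem_of_superset_of_univ_mem
    (cj2 : ∀ X Y Z : Set W, Y ∩ X = Z ∩ X → (Y ∈ π X ↔ Z ∈ π X))
    (hXZ : X ⊆ Z) (huniv : univ ∈ π X) : Z ∈ π X :=
  (cj2 X Z univ (by rw [inter_eq_right.2 hXZ, univ_inter])).2 huniv

theorem notMem_of_disjoint (cj1 : ∀ X : Set W, (∅ : Set W) ∉ π X)
    (cj2 : ∀ X Y Z : Set W, Y ∩ X = Z ∩ X → (Y ∈ π X ↔ Z ∈ π X))
    (hZX : Disjoint Z X) : Z ∉ π X := fun hZ =>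
  cj1 X ((cj2 X Z ∅ (by rw [hZX.inter_eq, empty_inter])).1 hZ)

theorem univ_mem_of_nonempty
    (cj5 : ∀ X Y Z : Set W, Z ∈ π X → Y ⊆ X → Y ∩ Z ≠ ∅ → Z ∈ π Y)
    (hW : univ ∈ π univ) (hX : X.Nonempty) : univ ∈ π X :=
  cj5 univ X univ hW (subset_univ X) (by rw [inter_univ]; exact hX.ne_empty)

end DeonticSelection

/-- under (CJ1), (CJ2) and (CJ5), if W ∈ π(W) then
π({w}) = U({w}), the collection of supersets of {w}. -/
theorem pi_singleton_eq_supersets {W : Type} (π : Set W → Set (Set W))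
    (cj1 : ∀ X : Set W, (∅ : Set W) ∉ π X)
    (cj2 : ∀ X Y Z : Set W, Y ∩ X = Z ∩ X → (Y ∈ π X ↔ Z ∈ π X))
    (cj5 : ∀ X Y Z : Set W, Z ∈ π X → Y ⊆ X → Y ∩ Z ≠ ∅ → Z ∈ π Y)
    (w : W) (hW : (Set.univ : Set W) ∈ π (Set.univ : Set W)) :
    π ({w} : Set W) = {Z : Set W | ({w} : Set W) ⊆ Z} := by
  ext Z
  refine ⟨fun hZ => ?_, fun hwZ => ?_⟩
  · by_contra hwZ
    exact notMem_of_disjoint cj1 cj2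
      (disjoint_singleton_right.2 fun hw => hwZ (singleton_subset_iff.2 hw)) hZ
  · exact mem_of_superset_of_univ_mem cj2 hwZ
      (univ_mem_of_nonempty cj5 hW (singleton_nonempty w))
end

section
/- (The three-point model C₃ of the Chisholm set.) Let W = {x, y, z} be a set with three distinct elements, and define π : Set W → Set (Set W) by: π(∅) = π({y}) = ∅; π(S) = {Y ⊆ W : z ∈ Y} for S ∈ {{z}, {x,z}, {y,z}, {x,y,z}}; and π(S) = {Y ⊆ W : x ∈ Y} for S ∈ {{x}, {x,y}}. Let A = {z} and B = {y, z}. Then: (i) π satisfies conditions (CJ1)–(CJ4); (ii) the conditional obligations O(A | W), O(B | A), and O(Bᶜ | Aᶜ) all hold; (iii) with av(x) = {x, y} and pv(x) = W one has av(x) ⊆ Aᶜ (so ◻→¬A at x), x ∉ B (so ¬B at x), av(x) ∩ B ≠ ∅ (so ◇→B at x), and pv(x) ∩ A ∩ B ≠ ∅ (so ◇(A ∧ B) at x); and (iv) for every X ⊆ W, {y} ∉ π(X) (so the pragmatic oddity, where {y} = ‖¬A ∧ B‖ would be obligatory, is avoided). -/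
/-!
The model is a ranked (preference) model: the eligible worlds are `x` and `z`, with `z` ranked
above `x`, and `y` is never eligible. Every selection function of the form
`π X = {Y | the best eligible worlds of X exist and all lie in Y}` for a well-founded ranking
satisfies (CJ1)–(CJ4), and `{y}` is never obligatory since it contains no eligible world.
The eight equations defining `π` say exactly that `π` is the ranked selection function of this
ranking, and the obligations are then read off the best worlds `{z}` (if `z ∈ X`) and `{x}`
(if `z ∉ X` but `x ∈ X`).
-/

open Set

section RankedSelection

variable {W α : Type*} [LinearOrder α] (D : Set W) (rank : W → α)

def bestIn (X : Set W) : Set W :=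
  {w | w ∈ X ∩ D ∧ ∀ v ∈ X ∩ D, rank w ≤ rank v}

def rankedSelection (X : Set W) : Set (Set W) :=
  {Y | (bestIn D rank X).Nonempty ∧ bestIn D rank X ⊆ Y}

variable {D rank}

theorem bestIn_subset (X : Set W) : bestIn D rank X ⊆ X ∩ D := fun _ hw => hw.1

theorem bestIn_nonempty [WellFoundedLT α] {X : Set W} (hX : (X ∩ D).Nonempty) :
    (bestIn D rank X).Nonempty := by
  obtain ⟨_, ⟨w, hw, rfl⟩, hmin⟩ := wellFounded_lt.has_min (rank '' (X ∩ D)) (hX.image rank)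
  exact ⟨w, hw, fun v hv => not_lt.1 (hmin _ (mem_image_of_mem rank hv))⟩

theorem mem_bestIn_of_subset {Y Z : Set W} (hYZ : Y ⊆ Z) {w : W} (hw : w ∈ bestIn D rank Z)
    (hwY : w ∈ Y) : w ∈ bestIn D rank Y :=
  ⟨⟨hwY, hw.1.2⟩, fun v hv => hw.2 v ⟨hYZ hv.1, hv.2⟩⟩

theorem bestIn_eq_singleton {X : Set W} {w : W} (hw : w ∈ X ∩ D)
    (hlt : ∀ v ∈ X ∩ D, v ≠ w → rank w < rank v) : bestIn D rank X = {w} := by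
  ext v
  refine ⟨fun hv => by_contra fun hvw => ?_, ?_⟩
  · exact (hlt v hv.1 hvw).not_ge (hv.2 w hw)
  · rintro rfl
    exact ⟨hw, fun u hu => (eq_or_ne u v).elim (fun h => h ▸ le_rfl) fun h => (hlt u hu h).le⟩

theorem rankedSelection_eq_of_bestIn_eq_singleton {X : Set W} {w : W}
    (h : bestIn D rank X = {w}) : rankedSelection D rank X = {Y | w ∈ Y} := by
  ext Y
  simp [rankedSelection, h]

theorem rankedSelection_eq_empty {X : Set W} (h : X ∩ D = ∅) : rankedSelection D rank X = ∅ :=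
  eq_empty_of_forall_notMem fun _ hY =>
    hY.1.ne_empty (subset_empty_iff.1 (h ▸ bestIn_subset X))

theorem empty_notMem_rankedSelection (X : Set W) : ∅ ∉ rankedSelection D rank X :=
  fun h => h.1.ne_empty (subset_empty_iff.1 h.2)

theorem mem_rankedSelection_congr {X Y Z : Set W} (h : Y ∩ X = Z ∩ X) :
    Y ∈ rankedSelection D rank X ↔ Z ∈ rankedSelection D rank X := by
  have hX : ∀ T : Set W, bestIn D rank X ⊆ T ↔ bestIn D rank X ⊆ T ∩ X := fun T => by
    rw [subset_inter_iff, iff_self_and]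
    exact fun _ w hw => (bestIn_subset X hw).1
  change _ ∧ _ ↔ _ ∧ _
  rw [hX Y, hX Z, h]

theorem inter_mem_rankedSelection {X Y Z : Set W} (hY : Y ∈ rankedSelection D rank X)
    (hZ : Z ∈ rankedSelection D rank X) : Y ∩ Z ∈ rankedSelection D rank X :=
  ⟨hY.1, subset_inter hY.2 hZ.2⟩

theorem diff_union_mem_rankedSelection [WellFoundedLT α] {X Y Z : Set W} (hYZ : Y ⊆ Z)
    (hX : X ∈ rankedSelection D rank Y) : (Z \ Y) ∪ X ∈ rankedSelection D rank Z := by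
  obtain ⟨w, hw⟩ := hX.1
  have hZD : (Z ∩ D).Nonempty := ⟨w, hYZ (bestIn_subset Y hw).1, (bestIn_subset Y hw).2⟩
  refine ⟨bestIn_nonempty hZD, fun v hv => ?_⟩
  -- a best world of `Z` lying in `Y ⊆ Z` is also best in `Y`, hence lies in `X`
  by_cases hvY : v ∈ Y
  · exact Or.inr (hX.2 (mem_bestIn_of_subset hYZ hv hvY))
  · exact Or.inl ⟨(bestIn_subset Z hv).1, hvY⟩

theorem inter_nonempty_of_mem_rankedSelection {X Y : Set W} (hY : Y ∈ rankedSelection D rank X) :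
    (Y ∩ D).Nonempty :=
  let ⟨w, hw⟩ := hY.1
  ⟨w, hY.2 hw, (bestIn_subset X hw).2⟩

end RankedSelection

section ThreePoint

variable {W : Type*} {x y z : W}

theorem eq_of_mem_iff_of_forall_eq_or_eq_or_eq (hcover : ∀ w : W, w = x ∨ w = y ∨ w = z)
    {S T : Set W} (hx : x ∈ S ↔ x ∈ T) (hy : y ∈ S ↔ y ∈ T) (hz : z ∈ S ↔ z ∈ T) : S = T := by
  ext w
  rcases hcover w with rfl | rfl | rfl <;> assumption

noncomputable abbrev chisholmRank (z : W) : W → ℕ := ({z}ᶜ : Set W).indicator 1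

theorem rankedSelection_chisholmRank_of_mem {X : Set W} (hz : z ∈ X) :
    rankedSelection {x, z} (chisholmRank z) X = {Y | z ∈ Y} := by
  refine rankedSelection_eq_of_bestIn_eq_singleton (bestIn_eq_singleton ⟨hz, by simp⟩ ?_)
  intro v _ hvz
  simp [hvz]

theorem rankedSelection_chisholmRank_of_notMem_of_mem {X : Set W} (hz : z ∉ X) (hx : x ∈ X) :
    rankedSelection {x, z} (chisholmRank z) X = {Y | x ∈ Y} := by
  refine rankedSelection_eq_of_bestIn_eq_singleton (bestIn_eq_singleton ⟨hx, by simp⟩ ?_)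
  rintro v ⟨hvX, rfl | rfl⟩ hvx
  exacts [(hvx rfl).elim, (hz hvX).elim]

theorem rankedSelection_chisholmRank_of_notMem_of_notMem {X : Set W} (hz : z ∉ X) (hx : x ∉ X) :
    rankedSelection {x, z} (chisholmRank z) X = ∅ :=
  rankedSelection_eq_empty <| eq_empty_of_forall_notMem <| by
    rintro v ⟨hvX, rfl | rfl⟩
    exacts [hx hvX, hz hvX]

theorem eq_rankedSelection_chisholmRank (hxy : x ≠ y) (hxz : x ≠ z) (hyz : y ≠ z)
    (hcover : ∀ w : W, w = x ∨ w = y ∨ w = z) (π : Set W → Set (Set W))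
    (h0 : π ∅ = ∅) (hy : π {y} = ∅) (hz : π {z} = {Y | z ∈ Y}) (hxz' : π {x, z} = {Y | z ∈ Y})
    (hyz' : π {y, z} = {Y | z ∈ Y}) (hW : π univ = {Y | z ∈ Y}) (hx : π {x} = {Y | x ∈ Y})
    (hxy' : π {x, y} = {Y | x ∈ Y}) :
    π = rankedSelection {x, z} (chisholmRank z) := by
  funext X
  have hX : ∀ {S : Set W}, (x ∈ X ↔ x ∈ S) → (y ∈ X ↔ y ∈ S) → (z ∈ X ↔ z ∈ S) → X = S :=
    eq_of_mem_iff_of_forall_eq_or_eq_or_eq hcover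
  by_cases hzX : z ∈ X
  · rw [rankedSelection_chisholmRank_of_mem hzX]
    by_cases hxX : x ∈ X <;> by_cases hyX : y ∈ X
    · rwa [hX (S := univ) (by simpa) (by simpa) (by simpa)]
    · rwa [hX (S := {x, z}) (by simpa) (by simpa [hxy.symm, hyz]) (by simpa)]
    · rwa [hX (S := {y, z}) (by simpa [hxy, hxz]) (by simpa) (by simpa)]
    · rwa [hX (S := {z}) (by simpa [hxz]) (by simpa [hyz]) (by simpa)]
  by_cases hxX : x ∈ X
  · rw [rankedSelection_chisholmRank_of_notMem_of_mem hzX hxX]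
    by_cases hyX : y ∈ X
    · rwa [hX (S := {x, y}) (by simpa) (by simpa) (by simpa [hxz.symm, hyz.symm])]
    · rwa [hX (S := {x}) (by simpa) (by simpa [hxy.symm]) (by simpa [hxz.symm])]
  · rw [rankedSelection_chisholmRank_of_notMem_of_notMem hzX hxX]
    by_cases hyX : y ∈ X
    · rwa [hX (S := {y}) (by simpa [hxy]) (by simpa) (by simpa [hyz.symm])]
    · rwa [hX (S := ∅) (by simpa) (by simpa) (by simpa)]

end ThreePoint

/-- The three-point model C₃ of the Chisholm set: with
W = {x, y, z}, A = {z}, B = {y, z}, and π defined by the listed equations,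
π satisfies (CJ1)–(CJ4), the conditional obligations O(A|W), O(B|A), O(Bᶜ|Aᶜ)
hold, the alethic facts at x hold with av(x) = {x,y} and pv(x) = W, and
{y} = ‖¬A ∧ B‖ belongs to no π(X) (the pragmatic oddity is avoided). -/
theorem three_point_chisholm_model {W : Type} (x y z : W)
    (hxy : x ≠ y) (hxz : x ≠ z) (hyz : y ≠ z)
    (hcover : ∀ w : W, w = x ∨ w = y ∨ w = z)
    (π : Set W → Set (Set W))
    (h0 : π (∅ : Set W) = ∅)
    (hy : π ({y} : Set W) = ∅)
    (hz : π ({z} : Set W) = {Y : Set W | z ∈ Y})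
    (hxz' : π ({x, z} : Set W) = {Y : Set W | z ∈ Y})
    (hyz' : π ({y, z} : Set W) = {Y : Set W | z ∈ Y})
    (hW : π (Set.univ : Set W) = {Y : Set W | z ∈ Y})
    (hx : π ({x} : Set W) = {Y : Set W | x ∈ Y})
    (hxy' : π ({x, y} : Set W) = {Y : Set W | x ∈ Y}) :
    -- (i) π satisfies (CJ1)–(CJ4)
    (∀ X : Set W, (∅ : Set W) ∉ π X) ∧
    (∀ X Y Z : Set W, Y ∩ X = Z ∩ X → (Y ∈ π X ↔ Z ∈ π X)) ∧
    (∀ X Y Z : Set W, Y ∈ π X → Z ∈ π X → Y ∩ Z ∈ π X) ∧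
    (∀ X Y Z : Set W, X ⊆ Y → Y ⊆ Z → X ∈ π Y → (Z \ Y) ∪ X ∈ π Z) ∧
    -- (ii) the conditional obligations O(A | W), O(B | A), O(Bᶜ | Aᶜ),
    -- where A = {z} and B = {y, z}
    ((Set.univ : Set W) ∩ {z} ≠ ∅ ∧
      ∀ X : Set W, X ⊆ Set.univ → X ∩ {z} ≠ ∅ → ({z} : Set W) ∈ π X) ∧
    (({z} : Set W) ∩ {y, z} ≠ ∅ ∧
      ∀ X : Set W, X ⊆ {z} → X ∩ {y, z} ≠ ∅ → ({y, z} : Set W) ∈ π X) ∧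
    ((({z} : Set W)ᶜ ∩ ({y, z} : Set W)ᶜ ≠ ∅) ∧
      ∀ X : Set W, X ⊆ ({z} : Set W)ᶜ → X ∩ ({y, z} : Set W)ᶜ ≠ ∅ →
        (({y, z} : Set W)ᶜ : Set W) ∈ π X) ∧
    -- (iii) alethic facts at x, with av(x) = {x, y} and pv(x) = univ
    (({x, y} : Set W) ⊆ ({z} : Set W)ᶜ) ∧
    (x ∉ ({y, z} : Set W)) ∧
    (({x, y} : Set W) ∩ ({y, z} : Set W) ≠ ∅) ∧
    ((Set.univ : Set W) ∩ {z} ∩ {y, z} ≠ ∅) ∧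
    -- (iv) the pragmatic oddity is avoided
    (∀ X : Set W, ({y} : Set W) ∉ π X) := by
  obtain rfl := eq_rankedSelection_chisholmRank hxy hxz hyz hcover π h0 hy hz hxz' hyz' hW hx hxy'
  refine ⟨empty_notMem_rankedSelection, fun _ _ _ => mem_rankedSelection_congr,
    fun _ _ _ => inter_mem_rankedSelection, fun _ _ _ _ hYZ => diff_union_mem_rankedSelection hYZ,
    ⟨by simp, ?_⟩, ⟨by simp, ?_⟩, ⟨?_, ?_⟩, by simp [hyz.symm, hxz.symm], by simp [hxy, hxz],
    (nonempty_of_mem (x := y) (by simp)).ne_empty, by simp, ?_⟩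
  · intro X _ hXA
    obtain ⟨_, hzX, rfl⟩ := nonempty_iff_ne_empty.2 hXA
    simp [rankedSelection_chisholmRank_of_mem hzX]
  · intro X hXA hXB
    obtain ⟨w, hwX, -⟩ := nonempty_iff_ne_empty.2 hXB
    obtain rfl : w = z := hXA hwX
    simp [rankedSelection_chisholmRank_of_mem hwX]
  · exact (nonempty_of_mem (x := x) (show x ∈ ({z}ᶜ ∩ {y, z}ᶜ : Set W) by simp [hxy, hxz])).ne_empty
  · intro X hXA hXB
    obtain ⟨w, hwX, hwB⟩ := nonempty_iff_ne_empty.2 hXB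
    obtain rfl : w = x := (hcover w).resolve_right hwB
    rw [rankedSelection_chisholmRank_of_notMem_of_mem (fun h => hXA h rfl) hwX]
    exact hwB
  · intro X hyX
    exact (inter_nonempty_of_mem_rankedSelection hyX).ne_empty (by simp [hxy.symm, hyz])
end

section
/- (A four-point model of the extended dog–sign–fence scenario.) Let W = {a, b, c, d} be a set with four distinct elements, let A = {a, b, d}, B = {d}, C = {b}, av(a) = {a, b} and pv(a) = W. Then there exists a map π : Set W → Set (Set W) satisfying conditions (CJ1)–(CJ4) such that the following all hold: the conditional obligations O(Aᶜ | W), O(Bᶜ | Aᶜ), O(B | A), and O(C | A ∩ Bᶜ); av(a) ⊆ A ∩ Bᶜ (factual necessity of dog-and-no-sign); pv(a) ∩ Aᶜ ≠ ∅ (potential possibility of no dog); pv(a) ∩ A ∩ B ≠ ∅ (potential possibility of dog and sign); a ∉ C (no fence); and av(a) ∩ C ≠ ∅ (factual possibility of a fence). -/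
/-!
Rank the worlds by deontic ideality, c (no dog) ≺ d (dog and sign) ≺ b (dog, no sign,
fence) ≺ a, and let π(X) consist of the supersets of the best worlds of X. A choice
function satisfying Chernoff's condition (the best worlds of Z that lie in Y ⊆ Z are among
the best of Y), as choosing minima of a well-founded rank does, always yields a π satisfying
(CJ1)–(CJ4). Then O(B | A) holds as soon as every world of A ∩ B ranks strictly below every
world of A \ B, which is immediate for the four obligations.
-/

section Selection

variable {W : Type*}

def piOfSelection (s : Set W → Set W) (X : Set W) : Set (Set W) :=
  {Y | (s X).Nonempty ∧ s X ⊆ Y}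

variable {s : Set W → Set W}

theorem empty_notMem_piOfSelection (X : Set W) : ∅ ∉ piOfSelection s X :=
  fun ⟨hne, hsub⟩ => Set.not_nonempty_empty (hne.mono hsub)

theorem mem_piOfSelection_congr (hs : ∀ X, s X ⊆ X) {X Y Z : Set W} (h : Y ∩ X = Z ∩ X) :
    Y ∈ piOfSelection s X ↔ Z ∈ piOfSelection s X := by
  have transfer : ∀ {U V : Set W}, U ∩ X = V ∩ X → s X ⊆ U → s X ⊆ V :=
    fun hUV hU _ hw => ((Set.ext_iff.mp hUV _).mp ⟨hU hw, hs X hw⟩).1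
  exact ⟨fun ⟨hne, hY⟩ => ⟨hne, transfer h hY⟩, fun ⟨hne, hZ⟩ => ⟨hne, transfer h.symm hZ⟩⟩

theorem inter_mem_piOfSelection {X Y Z : Set W} (hY : Y ∈ piOfSelection s X)
    (hZ : Z ∈ piOfSelection s X) : Y ∩ Z ∈ piOfSelection s X :=
  ⟨hY.1, Set.subset_inter hY.2 hZ.2⟩

theorem diff_union_mem_piOfSelection (hs : ∀ X, s X ⊆ X)
    (hne : ∀ X, X.Nonempty → (s X).Nonempty) (hchernoff : ∀ Y Z, Y ⊆ Z → s Z ∩ Y ⊆ s Y)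
    {X Y Z : Set W} (hYZ : Y ⊆ Z) (hX : X ∈ piOfSelection s Y) :
    (Z \ Y) ∪ X ∈ piOfSelection s Z := by
  refine ⟨hne Z ((hX.1.mono (hs Y)).mono hYZ), fun z hz => ?_⟩
  by_cases hzY : z ∈ Y
  · exact Or.inr (hX.2 (hchernoff Y Z hYZ ⟨hz, hzY⟩))
  · exact Or.inl ⟨hs Z hz, hzY⟩

def CondObligation (π : Set W → Set (Set W)) (A B : Set W) : Prop :=
  A ∩ B ≠ ∅ ∧ ∀ X : Set W, X ⊆ A → X ∩ B ≠ ∅ → B ∈ π X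

end Selection

section Rank

variable {W α : Type*} [LinearOrder α] (r : W → α)

def rankMinimal (X : Set W) : Set W :=
  {x ∈ X | ∀ y ∈ X, r x ≤ r y}

theorem rankMinimal_subset (X : Set W) : rankMinimal r X ⊆ X :=
  fun _ hx => hx.1

theorem rankMinimal_nonempty [WellFoundedLT α] {X : Set W} (hX : X.Nonempty) :
    (rankMinimal r X).Nonempty :=
  ⟨Function.argminOn r X hX, Function.argminOn_mem r X hX,
    fun _ hy => Function.argminOn_le r X hy⟩

theorem rankMinimal_inter_subset {Y Z : Set W} (hYZ : Y ⊆ Z) :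
    rankMinimal r Z ∩ Y ⊆ rankMinimal r Y :=
  fun _ ⟨hx, hxY⟩ => ⟨hxY, fun y hy => hx.2 y (hYZ hy)⟩

theorem condObligation_of_rank_lt [WellFoundedLT α] {A B : Set W} (hAB : (A ∩ B).Nonempty)
    (hlt : ∀ x ∈ A ∩ B, ∀ y ∈ A \ B, r x < r y) :
    CondObligation (piOfSelection (rankMinimal r)) A B := by
  refine ⟨hAB.ne_empty, fun X hXA hXB => ?_⟩
  obtain ⟨x, hxX, hxB⟩ := Set.nonempty_iff_ne_empty.mpr hXB
  refine ⟨rankMinimal_nonempty r ⟨x, hxX⟩, fun m hm => ?_⟩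
  by_contra hmB
  exact not_le_of_gt (hlt x ⟨hXA hxX, hxB⟩ m ⟨hXA hm.1, hmB⟩) (hm.2 x hxX)

end Rank

open Classical in
noncomputable def dogSignFenceRank {W : Type*} (b c d : W) (w : W) : ℕ :=
  if w = c then 0 else if w = d then 1 else if w = b then 2 else 3

theorem dogSignFenceRank_values {W : Type*} {a b c d : W} (hab : a ≠ b) (hac : a ≠ c)
    (had : a ≠ d) (hbc : b ≠ c) (hbd : b ≠ d) (hcd : c ≠ d) :
    dogSignFenceRank b c d a = 3 ∧ dogSignFenceRank b c d b = 2 ∧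
      dogSignFenceRank b c d c = 0 ∧ dogSignFenceRank b c d d = 1 := by
  simp [dogSignFenceRank, hab, hac, had, hbc, hbd, hcd.symm]

/-- A four-point model of the extended dog–sign–fence scenario:
with W = {a, b, c, d}, A = {a, b, d}, B = {d}, C = {b}, av(a) = {a, b} and
pv(a) = W, there is a π satisfying (CJ1)–(CJ4) making the four conditional
obligations O(Aᶜ|W), O(Bᶜ|Aᶜ), O(B|A), O(C|A ∩ Bᶜ) true, together with the
stated alethic facts at a. -/
theorem four_point_dog_sign_fence_model {W : Type} (a b c d : W)
    (hab : a ≠ b) (hac : a ≠ c) (had : a ≠ d)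
    (hbc : b ≠ c) (hbd : b ≠ d) (hcd : c ≠ d)
    (hcover : ∀ w : W, w = a ∨ w = b ∨ w = c ∨ w = d) :
    ∃ π : Set W → Set (Set W),
      (∀ X : Set W, (∅ : Set W) ∉ π X) ∧
      (∀ X Y Z : Set W, Y ∩ X = Z ∩ X → (Y ∈ π X ↔ Z ∈ π X)) ∧
      (∀ X Y Z : Set W, Y ∈ π X → Z ∈ π X → Y ∩ Z ∈ π X) ∧
      (∀ X Y Z : Set W, X ⊆ Y → Y ⊆ Z → X ∈ π Y → (Z \ Y) ∪ X ∈ π Z) ∧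
      -- O(Aᶜ | W), where A = {a, b, d}
      ((Set.univ : Set W) ∩ ({a, b, d} : Set W)ᶜ ≠ ∅ ∧
        ∀ X : Set W, X ⊆ Set.univ → X ∩ ({a, b, d} : Set W)ᶜ ≠ ∅ →
          (({a, b, d} : Set W)ᶜ : Set W) ∈ π X) ∧
      -- O(Bᶜ | Aᶜ), where B = {d}
      ((({a, b, d} : Set W)ᶜ ∩ ({d} : Set W)ᶜ ≠ ∅) ∧
        ∀ X : Set W, X ⊆ ({a, b, d} : Set W)ᶜ → X ∩ ({d} : Set W)ᶜ ≠ ∅ →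
          (({d} : Set W)ᶜ : Set W) ∈ π X) ∧
      -- O(B | A)
      (({a, b, d} : Set W) ∩ ({d} : Set W) ≠ ∅ ∧
        ∀ X : Set W, X ⊆ ({a, b, d} : Set W) → X ∩ ({d} : Set W) ≠ ∅ →
          ({d} : Set W) ∈ π X) ∧
      -- O(C | A ∩ Bᶜ), where C = {b}
      ((({a, b, d} : Set W) ∩ ({d} : Set W)ᶜ) ∩ ({b} : Set W) ≠ ∅ ∧
        ∀ X : Set W, X ⊆ ({a, b, d} : Set W) ∩ ({d} : Set W)ᶜ →
          X ∩ ({b} : Set W) ≠ ∅ → ({b} : Set W) ∈ π X) ∧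
      -- alethic facts at world a, with av(a) = {a, b} and pv(a) = univ
      (({a, b} : Set W) ⊆ ({a, b, d} : Set W) ∩ ({d} : Set W)ᶜ) ∧
      ((Set.univ : Set W) ∩ ({a, b, d} : Set W)ᶜ ≠ ∅) ∧
      ((Set.univ : Set W) ∩ ({a, b, d} : Set W) ∩ ({d} : Set W) ≠ ∅) ∧
      (a ∉ ({b} : Set W)) ∧
      (({a, b} : Set W) ∩ ({b} : Set W) ≠ ∅) := by
  obtain ⟨ra, rb, rc, rd⟩ := dogSignFenceRank_values hab hac had hbc hbd hcd
  set r := dogSignFenceRank b c d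
  have hc : c ∉ ({a, b, d} : Set W) := by simp [hac.symm, hbc.symm, hcd]
  have hAc : (Set.univ : Set W) ∩ ({a, b, d} : Set W)ᶜ ≠ ∅ :=
    Set.nonempty_iff_ne_empty.mp ⟨c, by simpa using hc⟩
  refine ⟨piOfSelection (rankMinimal r), empty_notMem_piOfSelection,
    fun _ _ _ => mem_piOfSelection_congr (rankMinimal_subset r),
    fun _ _ _ => inter_mem_piOfSelection,
    fun _ _ _ _ hYZ => diff_union_mem_piOfSelection (rankMinimal_subset r)
      (fun _ => rankMinimal_nonempty r) (fun _ _ => rankMinimal_inter_subset r) hYZ,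
    condObligation_of_rank_lt r ⟨c, by simpa using hc⟩ ?_,
    condObligation_of_rank_lt r ⟨c, by simpa [hcd] using hc⟩ ?_,
    condObligation_of_rank_lt r ⟨d, by simp⟩ ?_,
    condObligation_of_rank_lt r ⟨b, by simp [hbd]⟩ ?_,
    ?_, hAc, Set.nonempty_iff_ne_empty.mp ⟨d, by simp⟩, by simp [hab],
    Set.nonempty_iff_ne_empty.mp ⟨b, by simp⟩⟩
  · rintro x ⟨-, hx⟩ y ⟨-, hy⟩
    have hxc : x = c := by
      rcases hcover x with rfl | rfl | rfl | rfl <;> simp at hx ⊢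
    simp only [Set.mem_compl_iff, not_not] at hy
    rcases hy with rfl | rfl | rfl <;> simp [hxc, ra, rb, rc, rd]
  · -- vacuous: Aᶜ \ Bᶜ is empty since d ∈ A
    rintro x - y ⟨hyA, hyB⟩
    simp only [Set.mem_compl_iff, not_not] at hyB
    simp [hyB] at hyA
  · rintro x ⟨-, rfl⟩ y ⟨hyA, hyd⟩
    rcases hyA with rfl | rfl | rfl <;> simp_all
  · rintro x ⟨-, rfl⟩ y ⟨⟨hyA, hyd⟩, hyb⟩
    rcases hyA with rfl | rfl | rfl <;> simp_all
  · rintro w (rfl | rfl) <;> simp [had, hbd]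
end

section
/- (The schema M contradicts violability.) Let W be a type, π : Set W → Set (Set W), and X₀ ⊆ W a context. Suppose the monotonicity schema M holds in context X₀: for all Y, Z ⊆ W, if Y ∩ Z is obligatory in context X₀ (i.e., Y ∩ Z ∈ π(X₀) and X₀ ∩ (Y ∩ Z)ᶜ ≠ ∅), then Y is obligatory in context X₀ (i.e., Y ∈ π(X₀) and X₀ ∩ Yᶜ ≠ ∅). Then no set A ⊆ W is obligatory in context X₀: there is no A with A ∈ π(X₀) and X₀ ∩ Aᶜ ≠ ∅. -/
/-- the schema M contradicts violability: if M holds in context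
X₀ then nothing is obligatory in context X₀. -/
theorem schema_M_contradicts_violability {W : Type}
    (π : Set W → Set (Set W)) (X₀ : Set W)
    (hM : ∀ Y Z : Set W, (Y ∩ Z ∈ π X₀ ∧ X₀ ∩ (Y ∩ Z)ᶜ ≠ ∅) →
      (Y ∈ π X₀ ∧ X₀ ∩ Yᶜ ≠ ∅)) :
    ¬ ∃ A : Set W, A ∈ π X₀ ∧ X₀ ∩ Aᶜ ≠ ∅ := by
  rintro ⟨A, hA, hA_violable⟩
  -- M with `Y = univ` and `Z = A` would make the tautology `univ` violable.
  have h_univ_violable : X₀ ∩ Set.univᶜ ≠ ∅ :=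
    (hM Set.univ A ⟨by rwa [Set.univ_inter], by rwa [Set.univ_inter]⟩).2
  exact h_univ_violable (by rw [Set.compl_univ, Set.inter_empty])
end
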